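/- arXiv:1702.04245 — 2 statements merged into one kernel-verified Lean document; each statement's English description precedes it below -/
import Mathlib

section
/- For every finite graph G and every minor H of G, β(H) ≤ 1 + √(2·e(G)), where e(G) denotes the number of edges of G. -/
open SimpleGraph

/-- `x` and `y` lie in the same component of `G - S`:
there is a walk from `x` to `y` in `G` avoiding `S`. -/
def ConnAvoiding {V : Type} (G : SimpleGraph V) (S : Set V) (x y : V) : Prop :=
  ∃ p : G.Walk x y, ∀ v ∈ p.support, v ∉ S

/-- `X` is a `(<k)`-inseparable set of vertices of `G`: it has at least `k` vertices and
no two of its vertices can be separated by deleting fewer than `k` vertices. -/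
def IsInseparable {V : Type} (G : SimpleGraph V) (k : ℕ) (X : Set V) : Prop :=
  k ≤ X.ncard ∧
  ∀ x ∈ X, ∀ y ∈ X, x ≠ y → ∀ S : Set V, S.ncard < k → x ∉ S → y ∉ S →
    ConnAvoiding G S x y

/-- `X` is a `k`-block of `G`: a maximal `(<k)`-inseparable set of vertices. -/
def IsBlock {V : Type} (G : SimpleGraph V) (k : ℕ) (X : Set V) : Prop :=
  IsInseparable G k X ∧ ∀ Y : Set V, IsInseparable G k Y → X ⊆ Y → Y = X

/-- The block number `β(G)`: the maximum `k` for which `G` contains a `k`-block. -/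
noncomputable def blockNumber {V : Type} (G : SimpleGraph V) : ℕ :=
  sSup {k : ℕ | ∃ X : Set V, IsBlock G k X}

/-- There is a `k`-fan from `v` to `U` in `G`: `k` paths starting at `v`, otherwise
disjoint, each ending in `U` (trivial paths allowed). -/
def IsFanTo {V : Type} (G : SimpleGraph V) (k : ℕ) (v : V) (U : Set V) : Prop :=
  ∃ (e : Fin k → V) (P : ∀ i : Fin k, G.Path v (e i)),
    (∀ i, e i ∈ U) ∧
    ∀ i j : Fin k, i ≠ j →
      ∀ w, w ∈ (P i).val.support → w ∈ (P j).val.support → w = v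

/-- `X` is a `k`-fan-set: from every `x ∈ X` there is a `k`-fan to `X`. -/
def IsFanSet {V : Type} (G : SimpleGraph V) (k : ℕ) (X : Set V) : Prop :=
  ∀ x ∈ X, IsFanTo G k x X

/-- The `∞`-admissibility of `G`: the maximum `k` for which `G` contains a nonempty
`k`-fan-set. -/
noncomputable def admInf {V : Type} (G : SimpleGraph V) : ℕ :=
  sSup {k : ℕ | ∃ X : Set V, X.Nonempty ∧ IsFanSet G k X}

/-- `C` is (the vertex set of) a connected component of the subgraph of `G` induced
on `A`: a maximal subset of `A` inducing a connected subgraph. -/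
def IsCompOf {V : Type} (G : SimpleGraph V) (A C : Set V) : Prop :=
  C ⊆ A ∧ (G.induce C).Connected ∧
  ∀ D : Set V, C ⊆ D → D ⊆ A → (G.induce D).Connected → D = C

/-- `H` is a minor of `G`, via disjoint nonempty connected branch sets. -/
def IsMinor {W V : Type} (H : SimpleGraph W) (G : SimpleGraph V) : Prop :=
  ∃ B : W → Set V,
    (∀ h, (B h).Nonempty) ∧
    (∀ h, (G.induce (B h)).Connected) ∧
    (∀ h h', h ≠ h' → Disjoint (B h) (B h')) ∧
    ∀ h h', H.Adj h h' → ∃ u ∈ B h, ∃ v ∈ B h', G.Adj u v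

/-- `H` is a topological minor of `G`: there are branch vertices `φ u` and, for every
edge `uv` of `H`, a path in `G` from `φ u` to `φ v`; distinct edge-paths meet only in
branch vertices (hence only in common endpoints), and internal vertices of the paths
are not branch vertices. -/
def IsTopMinor {W V : Type} (H : SimpleGraph W) (G : SimpleGraph V) : Prop :=
  ∃ (φ : W ↪ V) (P : ∀ u v : W, H.Adj u v → G.Path (φ u) (φ v)),
    (∀ u v (h : H.Adj u v) w, w ∈ (P u v h).val.support →
        w ∈ Set.range φ → w = φ u ∨ w = φ v) ∧
    (∀ u v (h : H.Adj u v) u' v' (h' : H.Adj u' v'), s(u, v) ≠ s(u', v') →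
        ∀ w, w ∈ (P u v h).val.support → w ∈ (P u' v' h').val.support →
          w ∈ Set.range φ)

/-- A tree-decomposition of `G` with tree on node type `T`. -/
structure TreeDecomp {V : Type} (G : SimpleGraph V) (T : Type) where
  tree : SimpleGraph T
  isTree : tree.IsTree
  part : T → Set V
  part_covers : ∀ v : V, ∃ t, v ∈ part t
  part_edge : ∀ ⦃u v : V⦄, G.Adj u v → ∃ t, u ∈ part t ∧ v ∈ part t
  part_path : ∀ (t₁ t₂ t₃ : T) (p : tree.Path t₁ t₃), t₂ ∈ p.val.support →
    part t₁ ∩ part t₃ ⊆ part t₂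

/-- `m` pairwise vertex-disjoint `A`–`B` paths in `G`. -/
def DisjPaths {V : Type} (G : SimpleGraph V) (m : ℕ) (A B : Set V) : Prop :=
  ∃ (a b : Fin m → V) (P : ∀ i : Fin m, G.Path (a i) (b i)),
    (∀ i, a i ∈ A) ∧ (∀ i, b i ∈ B) ∧
    ∀ i j : Fin m, i ≠ j → ∀ w, w ∈ (P i).val.support → w ∉ (P j).val.support

/-- `a` is lexicographically smaller than `b` as `(n+1)`-tuples `(a 0, …, a n)`. -/
def FatLexLT (n : ℕ) (a b : ℕ → ℕ) : Prop :=
  ∃ i ≤ n, (∀ j < i, a j = b j) ∧ a i < b i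

namespace TreeDecomp

variable {V T : Type} {G : SimpleGraph V}

/-- The tree-decomposition has adhesion less than `k`. -/
def AdhesionLT (D : TreeDecomp G T) (k : ℕ) : Prop :=
  ∀ ⦃s t : T⦄, D.tree.Adj s t → (D.part s ∩ D.part t).ncard < k

/-- The torso of the part at node `t`: the induced subgraph on `part t`, with edges
added between any two vertices lying in a common adhesion-set at `t`. -/
def torso (D : TreeDecomp G T) (t : T) : SimpleGraph V where
  Adj u v := u ≠ v ∧ u ∈ D.part t ∧ v ∈ D.part t ∧
    (G.Adj u v ∨ ∃ s : T, D.tree.Adj s t ∧ u ∈ D.part s ∧ v ∈ D.part s)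
  symm := ⟨by
    rintro u v ⟨h1, h2, h3, h4⟩
    refine ⟨h1.symm, h3, h2, ?_⟩
    rcases h4 with h | ⟨s, hs, hu, hv⟩
    · exact Or.inl h.symm
    · exact Or.inr ⟨s, hs, hv, hu⟩⟩
  loopless := ⟨fun u h => h.1 rfl⟩

/-- Degree of `x` in the torso at `t`. -/
noncomputable def torsoDeg (D : TreeDecomp G T) (t : T) (x : V) : ℕ :=
  ((D.torso t).neighborSet x).ncard

/-- The width of a tree-decomposition: `max (|V_t| - 1)`. -/
noncomputable def width [Fintype T] (D : TreeDecomp G T) : ℕ :=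
  Finset.univ.sup fun t : T => (D.part t).ncard - 1

/-- Entry `i` of the fatness tuple: the number of parts of size `n - i`,
where `n = |V(G)|`. -/
noncomputable def fatness [Fintype V] (D : TreeDecomp G T) (i : ℕ) : ℕ :=
  {t : T | (D.part t).ncard = Fintype.card V - i}.ncard

/-- The tree-decomposition is `k`-atomic: it has adhesion `< k` and its fatness is
lexicographically minimum among all tree-decompositions of `G` of adhesion `< k`. -/
def IsAtomic [Fintype V] (D : TreeDecomp G T) (k : ℕ) : Prop :=
  D.AdhesionLT k ∧
  ∀ (T' : Type) (_ : Fintype T') (D' : TreeDecomp G T'), D'.AdhesionLT k →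
    ¬ FatLexLT (Fintype.card V) D'.fatness D.fatness

/-- The tree-decomposition is `k`-lean. -/
def IsLean (D : TreeDecomp G T) (k : ℕ) : Prop :=
  D.AdhesionLT k ∧
  ∀ (s t : T) (A B : Set V), A ⊆ D.part s → B ⊆ D.part t →
    A.ncard = B.ncard → A.ncard ≤ k →
    DisjPaths G A.ncard A B ∨
    ∃ u w : T, D.tree.Adj u w ∧
      (∀ p : D.tree.Path s t, s(u, w) ∈ p.val.edges) ∧
      (D.part u ∩ D.part w).ncard < A.ncard

end TreeDecomp

/-! The bound comes from counting edges: a `(<k)`-inseparable set of `H` consists of vertices of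
degree at least `k - 1`, so `k (k - 1) ≤ 2 e(H)`, and contracting the branch sets of a minor
model maps the edges of `G` onto those of `H`, so `e(H) ≤ e(G)`. -/

lemma IsMinor.edgeSet_ncard_le {W V : Type} [Finite V] {H : SimpleGraph W} {G : SimpleGraph V}
    (hH : IsMinor H G) : H.edgeSet.ncard ≤ G.edgeSet.ncard := by
  obtain ⟨B, -, -, hdisj, hadj⟩ := hH
  cases isEmpty_or_nonempty W
  · simp [Set.eq_empty_of_isEmpty H.edgeSet]
  let π : V → W := fun v => Classical.epsilon (v ∈ B ·)
  have hπ : ∀ w, ∀ v ∈ B w, π v = w := fun w v hv => by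
    by_contra hne
    exact Set.disjoint_left.mp (hdisj _ _ hne)
      (Classical.epsilon_spec (p := (v ∈ B ·)) ⟨w, hv⟩) hv
  calc H.edgeSet.ncard ≤ (Sym2.map π '' G.edgeSet).ncard := by
        refine Set.ncard_le_ncard (fun e he => ?_) (G.edgeSet.toFinite.image _)
        induction e using Sym2.ind with
        | _ a b =>
          obtain ⟨u, hu, v, hv, huv⟩ := hadj a b he
          exact ⟨s(u, v), huv, by simp [hπ a u hu, hπ b v hv]⟩
    _ ≤ G.edgeSet.ncard := Set.ncard_image_le G.edgeSet.toFinite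

lemma not_connAvoiding_neighborSet {V : Type} {G : SimpleGraph V} {x y : V} (hxy : x ≠ y) :
    ¬ ConnAvoiding G (G.neighborSet x) x y := by
  rintro ⟨p, hp⟩
  cases p with
  | nil => exact hxy rfl
  | cons hxw _ => exact hp _ (by simp) hxw

lemma IsInseparable.sub_one_le_degree {W : Type} [Fintype W] {H : SimpleGraph W}
    [DecidableRel H.Adj] {k : ℕ} {X : Set W} (hX : IsInseparable H k X) {x : W} (hx : x ∈ X) :
    k - 1 ≤ H.degree x := by
  have hdeg : (H.neighborSet x).ncard = H.degree x := by
    rw [← Nat.card_coe_set_eq, Nat.card_eq_fintype_card, card_neighborSet_eq_degree]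
  by_contra! hlt
  have hsub : X \ {x} ⊆ H.neighborSet x := fun y ⟨hy, hyx⟩ => by
    by_contra hny
    exact not_connAvoiding_neighborSet (Ne.symm hyx)
      (hX.2 x hx y hy (Ne.symm hyx) _ (by omega) H.notMem_neighborSet_self hny)
  have hle := Set.ncard_le_ncard hsub
  rw [Set.ncard_sdiff_singleton_of_mem hx, hdeg] at hle
  have hk := hX.1
  omega

lemma IsInseparable.mul_sub_one_le_two_mul_ncard_edgeSet {W : Type} [Fintype W]
    {H : SimpleGraph W} [DecidableRel H.Adj] {k : ℕ} {X : Set W} (hX : IsInseparable H k X) :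
    k * (k - 1) ≤ 2 * H.edgeSet.ncard := by
  classical
  calc k * (k - 1) ≤ X.toFinset.card * (k - 1) := by
        rw [← Set.ncard_eq_toFinset_card']
        exact Nat.mul_le_mul_right _ hX.1
    _ ≤ ∑ v ∈ X.toFinset, H.degree v := by
        rw [← smul_eq_mul, ← Finset.sum_const]
        exact Finset.sum_le_sum fun x hx => hX.sub_one_le_degree (Set.mem_toFinset.mp hx)
    _ ≤ ∑ v, H.degree v := Finset.sum_le_sum_of_subset (Finset.subset_univ _)
    _ = 2 * H.edgeSet.ncard := by
        rw [H.sum_degrees_eq_twice_card_edges, Set.ncard_eq_toFinset_card']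
        rfl

lemma blockNumber_mul_sub_one_le {W : Type} [Fintype W] (H : SimpleGraph W) :
    blockNumber H * (blockNumber H - 1) ≤ 2 * H.edgeSet.ncard := by
  rcases Set.eq_empty_or_nonempty {k : ℕ | ∃ X : Set W, IsBlock H k X} with hs | hs
  · simp [blockNumber, hs]
  have hbdd : BddAbove {k : ℕ | ∃ X : Set W, IsBlock H k X} :=
    ⟨Nat.card W, fun k ⟨X, hX⟩ => hX.1.1.trans (Set.ncard_le_card X)⟩
  classical
  obtain ⟨X, hX⟩ := Nat.sSup_mem hs hbdd
  exact hX.1.mul_sub_one_le_two_mul_ncard_edgeSet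

lemma cast_le_one_add_sqrt_of_mul_sub_one_le {k m : ℕ} (h : k * (k - 1) ≤ 2 * m) :
    (k : ℝ) ≤ 1 + √(2 * m) := by
  have hsq : ((k - 1 : ℕ) : ℝ) ^ 2 ≤ 2 * m := by
    exact_mod_cast (sq (k - 1)).trans_le ((Nat.mul_le_mul_right _ (Nat.sub_le k 1)).trans h)
  have hk : (k : ℝ) ≤ ((k - 1 : ℕ) : ℝ) + 1 := by exact_mod_cast (show k ≤ k - 1 + 1 by omega)
  linarith [(le_abs_self _).trans (Real.abs_le_sqrt hsq)]

/-- for every minor `H` of `G`, `β(H) ≤ 1 + √(2 e(G))`. -/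
theorem stmt_6 {V W : Type} [Fintype V] [Fintype W] (G : SimpleGraph V)
    (H : SimpleGraph W) (hH : IsMinor H G) :
    (blockNumber H : ℝ) ≤ 1 + Real.sqrt (2 * (G.edgeSet.ncard : ℝ)) :=
  cast_le_one_add_sqrt_of_mul_sub_one_le
    ((blockNumber_mul_sub_one_le H).trans (Nat.mul_le_mul_left 2 hH.edgeSet_ncard_le))
end

section
/- Let p ≥ 0 and k ≥ 2 be integers, let T be a finite tree with maximum degree at most 3, and let X ⊆ V(T) be a set of at least (2p+1)(k−1) vertices each of which has degree at most 2 in T. Then there are p pairwise vertex-disjoint subtrees T_1, …, T_p of T such that |V(T_i) ∩ X| ≥ k for every i ∈ {1, …, p}. -/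
open SimpleGraph

/-!
Cut the subtrees off one at a time. For an edge `vw`, call the side of `w` in `T - vw` the branch
at `w`. Since the two sides of an edge partition `X`, some branch contains at least `k` vertices
of `X` as soon as `|X| > 2(k-1)`; take such a branch with as few vertices as possible. The
branches hanging off it below `w` contain at most `k - 1` vertices of `X` each, and as `v` is one
of the at most three neighbours of `w`, there are at most two of them, at most one if `w ∈ X`. So the chosen branch meets `X` in at least `k` and at
most `2(k-1)` vertices, and the rest of `T` is a tree containing at least `(2p-1)(k-1)` vertices
of `X`, to which induction on `p` applies.
-/

open Function

lemma Pairwise.fin_cons {α : Type*} {r : α → α → Prop} (hr : ∀ a b, r a b → r b a)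
    {n : ℕ} {a : α} {f : Fin n → α} (ha : ∀ i, r a (f i)) (hf : Pairwise (r on f)) :
    Pairwise (r on (Fin.cons a f : Fin (n + 1) → α)) := by
  intro i j hij
  cases i using Fin.cases <;> cases j using Fin.cases
  · exact absurd rfl hij
  · exact ha _
  · exact hr _ _ (ha _)
  · exact hf fun h => hij (congrArg _ h)

namespace SimpleGraph

variable {V : Type*} {G : SimpleGraph V} {u v w x y : V}

/-- For an edge `vw` of a tree, `G.branch v w` is the vertex set of the component of `G - vw`
containing `w`. -/
def branch (G : SimpleGraph V) (v w : V) : Set V := {u | G.dist w u < G.dist v u}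

lemma right_mem_branch (h : G.Adj v w) : w ∈ G.branch v w := by
  simp [branch, dist_eq_one_iff_adj.2 h]

lemma left_notMem_branch : v ∉ G.branch v w := by
  simp [branch]

lemma Connected.exists_adj_dist_add_one_eq (hG : G.Connected) (h : w ≠ u) :
    ∃ x, G.Adj w x ∧ G.dist x u + 1 = G.dist w u := by
  obtain ⟨p, -, hp⟩ := hG.exists_path_of_dist w u
  have hnil : ¬p.Nil := Walk.not_nil_of_ne h
  have hadj := p.adj_snd hnil
  refine ⟨p.snd, hadj, le_antisymm ?_ ?_⟩
  · rw [← hp, ← p.length_tail_add_one hnil]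
    exact Nat.add_le_add_right (dist_le _) 1
  · have := hG.dist_triangle (u := w) (v := p.snd) (w := u)
    rw [dist_eq_one_iff_adj.2 hadj] at this
    omega

namespace IsTree

lemma eq_of_adj_of_dist_add_one_eq (hG : G.IsTree) (hx : G.Adj w x) (hy : G.Adj w y)
    (hxu : G.dist x u + 1 = G.dist w u) (hyu : G.dist y u + 1 = G.dist w u) : x = y := by
  have hpath {z : V} (h : G.Adj w z) (hz : G.dist z u + 1 = G.dist w u) :
      ∃ r : G.Walk z u, (Walk.cons h r).IsPath := by
    obtain ⟨r, -, hr⟩ := hG.connected.exists_path_of_dist z u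
    exact ⟨r, Walk.isPath_of_length_eq_dist _ (by rw [Walk.length_cons, hr, hz])⟩
  obtain ⟨p, hp⟩ := hpath hx hxu
  obtain ⟨q, hq⟩ := hpath hy hyu
  simpa using congrArg (fun r : G.Path w u => r.1.snd)
    ((hG.isAcyclic.subsingleton_path w u).elim ⟨_, hp⟩ ⟨_, hq⟩)

lemma mem_branch_iff (hG : G.IsTree) (h : G.Adj v w) :
    u ∈ G.branch v w ↔ G.dist v u = G.dist w u + 1 := by
  have := hG.dist_eq_dist_add_one_of_adj u h
  rw [dist_comm, dist_comm (u := u)] at this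
  simp only [branch, Set.mem_ofPred_eq]
  omega

lemma compl_branch (hG : G.IsTree) (h : G.Adj v w) : (G.branch v w)ᶜ = G.branch w v := by
  ext u
  have := hG.dist_eq_dist_add_one_of_adj u h
  rw [dist_comm, dist_comm (u := u)] at this
  simp only [Set.mem_compl_iff, hG.mem_branch_iff h, hG.mem_branch_iff h.symm]
  omega

lemma branch_subset_branch (hG : G.IsTree) (hvw : G.Adj v w) (hwx : G.Adj w x)
    (hxv : x ≠ v) : G.branch w x ⊆ G.branch v w := by
  intro u hu
  rw [hG.mem_branch_iff hwx] at hu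
  by_contra hu'
  rw [← Set.mem_compl_iff, hG.compl_branch hvw, hG.mem_branch_iff hvw.symm] at hu'
  exact hxv (hG.eq_of_adj_of_dist_add_one_eq hwx hvw.symm hu.symm hu'.symm)

lemma branch_subset_insert_biUnion (hG : G.IsTree) (hvw : G.Adj v w) :
    G.branch v w ⊆ insert w (⋃ x ∈ G.neighborSet w \ {v}, G.branch w x) := by
  intro u hu
  rcases eq_or_ne w u with rfl | hwu
  · exact Set.mem_insert _ _
  obtain ⟨x, hwx, hxu⟩ := hG.connected.exists_adj_dist_add_one_eq hwu
  rw [hG.mem_branch_iff hvw] at hu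
  refine Set.mem_insert_of_mem _
    (Set.mem_biUnion ⟨hwx, ?_⟩ ((hG.mem_branch_iff hwx).2 hxu.symm))
  rintro rfl
  omega

lemma connected_induce_branch (hG : G.IsTree) (hvw : G.Adj v w) :
    (G.induce (G.branch v w)).Connected := by
  classical
  refine induce_connected_of_patches w (right_mem_branch hvw) fun {u} hu => ?_
  obtain ⟨q, -, hq⟩ := hG.connected.exists_path_of_dist w u
  refine ⟨{z | z ∈ q.support}, fun z hz => ?_, q.start_mem_support, q.end_mem_support,
    q.connected_induce_support.preconnected _ _⟩
  have hsplit := congrArg Walk.length (q.take_spec hz)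
  rw [Walk.length_append] at hsplit
  have h1 := dist_le (q.takeUntil z hz)
  have h2 := dist_le (q.dropUntil z hz)
  have h3 := hG.connected.dist_triangle (u := v) (v := z) (w := u)
  have h4 := (hG.mem_branch_iff hvw).1 hu
  -- `dist v z ≥ dist v u - dist z u = dist w u + 1 - dist z u ≥ dist w z + 1`
  show G.dist w z < G.dist v z
  omega

lemma ncard_inter_branch_le [Finite V] (hG : G.IsTree) (hvw : G.Adj v w) (X : Set V) {m : ℕ}
    (hm : ∀ x, G.Adj w x → x ≠ v → (X ∩ G.branch w x).ncard ≤ m) :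
    (X ∩ G.branch v w).ncard ≤ (X ∩ {w}).ncard + (G.neighborSet w \ {v}).ncard * m := by
  set N := (Set.toFinite (G.neighborSet w \ {v})).toFinset
  calc (X ∩ G.branch v w).ncard
      ≤ (X ∩ {w} ∪ ⋃ x ∈ N, X ∩ G.branch w x).ncard := by
        refine Set.ncard_le_ncard (fun u ⟨huX, hu⟩ => ?_)
        rcases hG.branch_subset_insert_biUnion hvw hu with rfl | hu
        · exact Or.inl ⟨huX, rfl⟩
        · obtain ⟨x, hx, hux⟩ := Set.mem_iUnion₂.1 hu
          exact Or.inr (Set.mem_biUnion ((Set.Finite.mem_toFinset _).2 hx) ⟨huX, hux⟩)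
    _ ≤ (X ∩ {w}).ncard + ∑ x ∈ N, (X ∩ G.branch w x).ncard :=
        (Set.ncard_union_le _ _).trans (Nat.add_le_add_left (N.set_ncard_biUnion_le _) _)
    _ ≤ (X ∩ {w}).ncard + N.card * m := by
        refine Nat.add_le_add_left (N.sum_le_card_nsmul _ _ fun x hx => ?_) _
        obtain ⟨hwx, hxv⟩ := (Set.Finite.mem_toFinset _).1 hx
        exact hm x hwx hxv
    _ = (X ∩ {w}).ncard + (G.neighborSet w \ {v}).ncard * m := by
        rw [Set.ncard_eq_toFinset_card (G.neighborSet w \ {v})]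

lemma exists_adj_le_ncard_inter_branch [Finite V] (hG : G.IsTree) {k : ℕ} (hk : 2 ≤ k)
    {X : Set V} (hX : 2 * (k - 1) < X.ncard) :
    ∃ v w, G.Adj v w ∧ k ≤ (X ∩ G.branch v w).ncard := by
  obtain ⟨a, b, -, -, hab⟩ := (Set.one_lt_ncard_iff (Set.toFinite X)).1 (by omega : 1 < X.ncard)
  obtain ⟨x, hax, -⟩ := hG.connected.exists_adj_dist_add_one_eq hab
  have hsplit := Set.ncard_inter_add_ncard_sdiff_eq_ncard X (G.branch a x)
  rw [Set.sdiff_eq, hG.compl_branch hax] at hsplit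
  by_cases h : k ≤ (X ∩ G.branch a x).ncard
  · exact ⟨a, x, hax, h⟩
  · exact ⟨x, a, hax.symm, by omega⟩

lemma exists_adj_le_ncard_inter_branch_le [Finite V] (hG : G.IsTree)
    (hdeg : ∀ x, (G.neighborSet x).ncard ≤ 3) {k : ℕ} (hk : 2 ≤ k) {X : Set V}
    (hXdeg : ∀ x ∈ X, (G.neighborSet x).ncard ≤ 2) (hX : 2 * (k - 1) < X.ncard) :
    ∃ v w, G.Adj v w ∧ k ≤ (X ∩ G.branch v w).ncard ∧
      (X ∩ G.branch v w).ncard ≤ 2 * (k - 1) := by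
  obtain ⟨⟨v, w⟩, ⟨hvw, hkB⟩, hmin⟩ := Set.exists_min_image
    {e : V × V | G.Adj e.1 e.2 ∧ k ≤ (X ∩ G.branch e.1 e.2).ncard}
    (fun e => (G.branch e.1 e.2).ncard) (Set.toFinite _)
    (let ⟨v, w, h⟩ := hG.exists_adj_le_ncard_inter_branch hk hX; ⟨(v, w), h⟩)
  dsimp only at hvw hkB hmin
  have hchild : ∀ x, G.Adj w x → x ≠ v → (X ∩ G.branch w x).ncard ≤ k - 1 := by
    intro x hwx hxv
    by_contra! hx
    have hlt : (G.branch w x).ncard < (G.branch v w).ncard :=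
      Set.ncard_lt_ncard <| (Set.ssubset_iff_of_subset (hG.branch_subset_branch hvw hwx hxv)).2
        ⟨w, right_mem_branch hvw, left_notMem_branch⟩
    exact (hmin (w, x) ⟨hwx, show k ≤ (X ∩ G.branch w x).ncard by omega⟩).not_gt hlt
  have hcount := hG.ncard_inter_branch_le hvw X hchild
  have hdeg_w := Set.ncard_sdiff_singleton_add_one hvw.symm (s := G.neighborSet w)
  refine ⟨v, w, hvw, hkB, ?_⟩
  by_cases hwX : w ∈ X
  · have hw1 : (X ∩ {w}).ncard ≤ 1 :=
      (Set.ncard_le_ncard Set.inter_subset_right).trans (Set.ncard_singleton w).le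
    have := Nat.mul_le_mul_right (k - 1) (by have := hXdeg w hwX; omega :
      (G.neighborSet w \ {v}).ncard ≤ 1)
    omega
  · have hw0 : X ∩ {w} = ∅ := Set.inter_singleton_eq_empty.2 hwX
    have := Nat.mul_le_mul_right (k - 1) (by have := hdeg w; omega :
      (G.neighborSet w \ {v}).ncard ≤ 2)
    rw [hw0, Set.ncard_empty] at hcount
    omega

end IsTree

lemma connected_induce_image_val {s : Set V} {t : Set s}
    (h : ((G.induce s).induce t).Connected) :
    (G.induce (Subtype.val '' t)).Connected :=
  h.map ⟨fun x => ⟨x.1.1, x.1, x.2, rfl⟩, id⟩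
    (by rintro ⟨_, x, hx, rfl⟩; exact ⟨⟨x, hx⟩, rfl⟩)

lemma ncard_neighborSet_induce_le [Finite V] (s : Set V) (v : s) :
    ((G.induce s).neighborSet v).ncard ≤ (G.neighborSet v).ncard := by
  rw [neighborSet_induce]
  exact Set.ncard_le_ncard_of_injOn Subtype.val (fun _ h => h) Subtype.val_injective.injOn

end SimpleGraph

theorem SimpleGraph.IsTree.exists_disjoint_subtrees {V : Type*} [Finite V] {G : SimpleGraph V}
    (hG : G.IsTree) (hdeg : ∀ x, (G.neighborSet x).ncard ≤ 3) {k : ℕ} (hk : 2 ≤ k) (p : ℕ)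
    {X : Set V} (hXdeg : ∀ x ∈ X, (G.neighborSet x).ncard ≤ 2)
    (hX : (2 * p + 1) * (k - 1) ≤ X.ncard) :
    ∃ S : Fin p → Set V, (∀ i, (G.induce (S i)).Connected) ∧ Pairwise (Disjoint on S) ∧
      ∀ i, k ≤ (S i ∩ X).ncard := by
  induction p generalizing V with
  | zero => exact ⟨Fin.elim0, fun i => i.elim0, fun i => i.elim0, fun i => i.elim0⟩
  | succ p ih =>
    have hstep : (2 * (p + 1) + 1) * (k - 1) = (2 * p + 1) * (k - 1) + 2 * (k - 1) := by ring
    obtain ⟨v, w, hvw, hkB, hBk⟩ := hG.exists_adj_le_ncard_inter_branch_le hdeg hk hXdeg (by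
      have := Nat.mul_le_mul_right (k - 1) (Nat.le_add_left 1 (2 * p)); omega)
    set B := G.branch v w
    set C := G.branch w v
    have hBC : Bᶜ = C := hG.compl_branch hvw
    have hXC : (X ∩ B).ncard + (Subtype.val ⁻¹' X : Set C).ncard = X.ncard := by
      rw [← Set.ncard_image_of_injective _ Subtype.val_injective, Subtype.image_preimage_coe,
        Set.inter_comm C X, ← hBC, ← Set.sdiff_eq, Set.ncard_inter_add_ncard_sdiff_eq_ncard]
    have hCtree : (G.induce C).IsTree :=
      ⟨hG.connected_induce_branch hvw.symm, hG.isAcyclic.induce C⟩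
    obtain ⟨S, hSconn, hSdisj, hSX⟩ := ih (X := (Subtype.val ⁻¹' X : Set C)) hCtree
      (fun x => (ncard_neighborSet_induce_le C x).trans (hdeg x))
      (fun x hx => (ncard_neighborSet_induce_le C x).trans (hXdeg x hx)) (by omega)
    refine ⟨Fin.cons B fun i => Subtype.val '' S i, fun i => ?_, ?_, fun i => ?_⟩
    · cases i using Fin.cases
      · exact hG.connected_induce_branch hvw
      · exact connected_induce_image_val (hSconn _)
    · refine Pairwise.fin_cons (fun _ _ h => h.symm) (fun i => ?_)
        fun i j hij => (Set.disjoint_image_iff Subtype.val_injective).2 (hSdisj hij)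
      rw [← Set.subset_compl_iff_disjoint_left, hBC]
      exact Subtype.coe_image_subset C (S i)
    · cases i using Fin.cases
      · simpa [Set.inter_comm] using hkB
      · rw [Fin.cons_succ, ← Set.image_inter_preimage,
          Set.ncard_image_of_injective _ Subtype.val_injective]
        exact hSX _

/-- let `T` be a finite tree with maximum degree at most 3 and `X` a set
of at least `(2p+1)(k-1)` vertices of degree at most 2 (`p ≥ 0`, `k ≥ 2`). Then there
are `p` pairwise disjoint subtrees `T₁, …, T_p` of `T` with `|V(Tᵢ) ∩ X| ≥ k` for all `i`. -/
theorem stmt_15 {τ : Type} [Fintype τ] (T : SimpleGraph τ) (hT : T.IsTree)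
    (hdeg3 : ∀ x : τ, (T.neighborSet x).ncard ≤ 3)
    (p k : ℕ) (hk : 2 ≤ k) (X : Set τ)
    (hXdeg : ∀ x ∈ X, (T.neighborSet x).ncard ≤ 2)
    (hXcard : (2 * p + 1) * (k - 1) ≤ X.ncard) :
    ∃ S : Fin p → Set τ,
      (∀ i, (T.induce (S i)).Connected) ∧
      (∀ i j, i ≠ j → Disjoint (S i) (S j)) ∧
      ∀ i, k ≤ (S i ∩ X).ncard :=
  hT.exists_disjoint_subtrees hdeg3 hk p hXdeg hXcard
end
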